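/- (SSOL regret bound) Let (x_t, y_t), t = 1,…,T, with x_t ∈ R^d, y_t ∈ {−1,+1}, ‖x_t‖₂ ≤ X. Set A_0 = I, A_t = A_{t-1} + x_t x_t^⊤/r for r > 0, Φ_t(w) = (1/2) w^⊤ A_t w, λ_t = λ/t, θ_1 = 0, u_t = A_t^{-1} θ_t, w_t = soft-threshold of u_t at λ_t, hinge loss ℓ_t(w) = max(0, 1 − y_t w^⊤ x_t), θ_{t+1} = θ_t + η L_t y_t x_t with L_t the mistake indicator and additionally ‖x_t‖₁ ≤ X. Then for any w with w^⊤ A_T w ≤ D², the regret satisfies ∑_{t=1}^T ℓ_t(w_t) − ∑_{t=1}^T ℓ_t(w) ≤ D²/(2η) + (η/2)·r·d·log(1 + T X²/r) + λ X (log T + 1). -/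

import Mathlib

open Finset Matrix

noncomputable def dot {d : ℕ} (u v : Fin d → ℝ) : ℝ := ∑ i, u i * v i

/-!
The hinge loss is convex with subgradient `-L_t y_t x_t` at `w_t`, and soft thresholding moves
each coordinate of `u_t` by at most `λ/t`; so the regret is at most the linear regret
`∑ L_t y_t x_tᵀ (w - u_t)` of the unthresholded iterates, plus `λ X ∑ 1/t`.

The iterates `u_t = A_t⁻¹ θ_t` are dual averaging with the regularizers `Φ_t / η`. As `A_t` grows,
the conjugates `Φ_t*` shrink, so `⟨θ_{t+1}, w⟩ - Φ_t*(θ_{t+1})` telescopes, and Fenchel–Young at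
time `T` bounds the linear regret by `D²/(2η) + (η/2) ∑ x_tᵀ A_t⁻¹ x_t`. By the matrix
determinant lemma, `x_tᵀ A_t⁻¹ x_t ≤ r log (det A_t / det A_{t-1})`, and concavity of `log` on the
eigenvalues of `A_T`, whose trace is at most `d (1 + T X²/r)`, gives
`log det A_T ≤ d log (1 + T X²/r)`.
-/

open scoped MatrixOrder

noncomputable def softThreshold (c a : ℝ) : ℝ := Real.sign a * max (|a| - c) 0

lemma abs_softThreshold_sub_le {c : ℝ} (hc : 0 ≤ c) (a : ℝ) : |softThreshold c a - a| ≤ c := by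
  rw [softThreshold, abs_le]
  rcases lt_trichotomy a 0 with h | rfl | h
  · rw [Real.sign_of_neg h, abs_of_neg h]
    have := max_le (by linarith : -a - c ≤ c - a) (by linarith : (0 : ℝ) ≤ c - a)
    constructor <;> linarith [le_max_left (-a - c) 0]
  · simpa using hc
  · rw [Real.sign_of_pos h, abs_of_pos h]
    have := max_le (by linarith : a - c ≤ a + c) (by linarith : (0 : ℝ) ≤ a + c)
    constructor <;> linarith [le_max_left (a - c) 0]

lemma max_zero_one_sub_sub_le (a b : ℝ) :
    max 0 (1 - a) - max 0 (1 - b) ≤ (if 0 < max 0 (1 - a) then 1 else 0) * (b - a) := by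
  split_ifs with h
  · rw [max_eq_right (lt_max_iff.1 h |>.resolve_left (lt_irrefl 0)).le]
    linarith [le_max_right 0 (1 - b)]
  · linarith [not_lt.1 h, le_max_left 0 (1 - b)]

lemma sum_Icc_le_sub_of_le {f g : ℕ → ℝ} {T : ℕ} (h : ∀ t < T, g (t + 1) ≤ f (t + 1) - f t) :
    ∑ t ∈ Icc 1 T, g t ≤ f T - f 0 := by
  induction T with
  | zero => simp
  | succ T ih =>
    rw [sum_Icc_succ_top (by omega)]
    linarith [ih fun t ht => h t (by omega), h T (by omega)]

lemma sum_Icc_inv_le_log_add_one (T : ℕ) : ∑ t ∈ Icc 1 T, (t : ℝ)⁻¹ ≤ Real.log T + 1 := by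
  have := harmonic_le_one_add_log T
  rw [harmonic_eq_sum_Icc] at this
  push_cast at this
  linarith

section

variable {n : Type*}

lemma Matrix.PosDef.of_le {M N : Matrix n n ℝ} (hM : M.PosDef) (hMN : M ≤ N) : N.PosDef := by
  simpa using hM.add_posSemidef (le_iff.1 hMN)

variable [Fintype n]

lemma abs_dotProduct_le_of_abs_le {x v : n → ℝ} {c : ℝ} (hv : ∀ i, |v i| ≤ c) :
    |x ⬝ᵥ v| ≤ (∑ i, |x i|) * c :=
  calc |x ⬝ᵥ v| ≤ ∑ i, |x i * v i| := abs_sum_le_sum_abs _ _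
    _ ≤ ∑ i, |x i| * c := sum_le_sum fun i _ => by
        rw [abs_mul]
        exact mul_le_mul_of_nonneg_left (hv i) (abs_nonneg _)
    _ = (∑ i, |x i|) * c := (sum_mul ..).symm

lemma dotProduct_self_le_card_mul_sq {x : n → ℝ} {X : ℝ} (hx : √(∑ i, x i ^ 2) ≤ X) :
    x ⬝ᵥ x ≤ Fintype.card n * X ^ 2 := by
  have hsum := (Real.sqrt_le_iff.1 hx).2
  calc x ⬝ᵥ x = ∑ i, x i ^ 2 := by simp only [dotProduct, sq]
    _ ≤ ∑ _i : n, X ^ 2 := sum_le_sum fun i _ =>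
        (single_le_sum (fun j _ => sq_nonneg (x j)) (mem_univ i)).trans hsum
    _ = Fintype.card n * X ^ 2 := by simp

theorem hinge_sub_le_of_softThreshold {x u w v : n → ℝ} {L y c X : ℝ}
    (hL : L = if 0 < max 0 (1 - y * (w ⬝ᵥ x)) then 1 else 0) (hLy : |L * y| ≤ 1) (hc : 0 ≤ c)
    (hx : ∑ i, |x i| ≤ X) (hw : ∀ i, w i = softThreshold c (u i)) :
    max 0 (1 - y * (w ⬝ᵥ x)) - max 0 (1 - y * (v ⬝ᵥ x))
      ≤ L * y * (x ⬝ᵥ v - x ⬝ᵥ u) + c * X := by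
  have hsub := max_zero_one_sub_sub_le (y * (w ⬝ᵥ x)) (y * (v ⬝ᵥ x))
  rw [← hL] at hsub
  have hthr : |x ⬝ᵥ (u - w)| ≤ (∑ i, |x i|) * c := abs_dotProduct_le_of_abs_le fun i => by
    rw [Pi.sub_apply, abs_sub_comm, hw]
    exact abs_softThreshold_sub_le hc _
  have herr : L * y * (x ⬝ᵥ (u - w)) ≤ c * X :=
    calc L * y * (x ⬝ᵥ (u - w)) ≤ |L * y| * |x ⬝ᵥ (u - w)| := by
          rw [← abs_mul]
          exact le_abs_self _
      _ ≤ 1 * ((∑ i, |x i|) * c) := by gcongr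
      _ ≤ c * X := by nlinarith
  rw [dotProduct_sub] at herr
  rw [dotProduct_comm w x, dotProduct_comm v x] at hsub ⊢
  linear_combination hsub + herr

namespace Matrix

theorem det_add_vecMulVec {R : Type*} [CommRing R] [DecidableEq n] {A : Matrix n n R}
    (hA : IsUnit A.det) (u v : n → R) :
    (A + vecMulVec u v).det = A.det * (1 + v ⬝ᵥ A⁻¹ *ᵥ u) := by
  rw [vecMulVec_eq Unit, det_add_replicateCol_mul_replicateRow hA, det_unique (n := Unit),
    Matrix.mul_assoc, ← replicateCol_mulVec]
  rfl

variable {M N : Matrix n n ℝ}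

lemma IsHermitian.dotProduct_mulVec_comm (hM : M.IsHermitian) (a b : n → ℝ) :
    a ⬝ᵥ M *ᵥ b = b ⬝ᵥ M *ᵥ a := by
  rw [dotProduct_mulVec, ← mulVec_transpose, ← conjTranspose_eq_transpose_of_trivial, hM.eq,
    dotProduct_comm]

lemma IsHermitian.add_dotProduct_mulVec_add (hM : M.IsHermitian) (a b : n → ℝ) :
    (a + b) ⬝ᵥ M *ᵥ (a + b) = a ⬝ᵥ M *ᵥ a + 2 * (b ⬝ᵥ M *ᵥ a) + b ⬝ᵥ M *ᵥ b := by
  rw [add_dotProduct, mulVec_add, dotProduct_add, dotProduct_add,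
    hM.dotProduct_mulVec_comm a b]
  ring

lemma dotProduct_mulVec_le_of_le (hMN : M ≤ N) (v : n → ℝ) :
    v ⬝ᵥ M *ᵥ v ≤ v ⬝ᵥ N *ᵥ v := by
  have := (le_iff.1 hMN).dotProduct_mulVec_nonneg v
  rw [star_trivial, sub_mulVec, dotProduct_sub] at this
  linarith

lemma le_add_smul_vecMulVec_self {c : ℝ} (hc : 0 ≤ c) (x : n → ℝ) :
    M ≤ M + c • vecMulVec x x := by
  rw [le_iff, add_sub_cancel_left]
  simpa using (posSemidef_vecMulVec_self_star x).smul hc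

variable [DecidableEq n]

lemma PosDef.mulVec_inv_mulVec (hM : M.PosDef) (v : n → ℝ) : M *ᵥ (M⁻¹ *ᵥ v) = v := by
  rw [mulVec_mulVec, mul_nonsing_inv _ ((isUnit_iff_isUnit_det M).1 hM.isUnit), one_mulVec]

lemma PosDef.dotProduct_inv_mulVec_eq (hM : M.PosDef) (θ : n → ℝ) :
    (M⁻¹ *ᵥ θ) ⬝ᵥ M *ᵥ (M⁻¹ *ᵥ θ) = θ ⬝ᵥ M⁻¹ *ᵥ θ := by
  rw [hM.mulVec_inv_mulVec, dotProduct_comm]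

/-- Fenchel–Young for `w ↦ wᵀ M w / 2`, whose conjugate is `θ ↦ θᵀ M⁻¹ θ / 2`. -/
theorem PosDef.two_mul_dotProduct_sub_le (hM : M.PosDef) (θ w : n → ℝ) :
    2 * (θ ⬝ᵥ w) - w ⬝ᵥ M *ᵥ w ≤ θ ⬝ᵥ M⁻¹ *ᵥ θ := by
  set m := M⁻¹ *ᵥ θ
  have hexp := hM.1.add_dotProduct_mulVec_add m (w - m)
  rw [add_sub_cancel, hM.mulVec_inv_mulVec, sub_dotProduct, dotProduct_comm m θ] at hexp
  have hnonneg := hM.posSemidef.dotProduct_mulVec_nonneg (w - m)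
  rw [star_trivial] at hnonneg
  rw [dotProduct_comm θ w]
  linarith

theorem PosDef.dotProduct_inv_mulVec_le_of_le (hM : M.PosDef) (hN : N.PosDef) (hMN : M ≤ N)
    (θ : n → ℝ) : θ ⬝ᵥ N⁻¹ *ᵥ θ ≤ θ ⬝ᵥ M⁻¹ *ᵥ θ := by
  linarith [hM.two_mul_dotProduct_sub_le θ (N⁻¹ *ᵥ θ),
    dotProduct_mulVec_le_of_le hMN (N⁻¹ *ᵥ θ), hN.dotProduct_inv_mulVec_eq θ]

theorem PosDef.add_dotProduct_inv_mulVec_add_le (hM : M.PosDef) (hN : N.PosDef) (hMN : M ≤ N)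
    (θ g : n → ℝ) :
    (θ + g) ⬝ᵥ N⁻¹ *ᵥ (θ + g) ≤ θ ⬝ᵥ M⁻¹ *ᵥ θ + 2 * (g ⬝ᵥ N⁻¹ *ᵥ θ) + g ⬝ᵥ N⁻¹ *ᵥ g := by
  rw [hN.inv.1.add_dotProduct_mulVec_add]
  linarith [hM.dotProduct_inv_mulVec_le_of_le hN hMN θ]

theorem PosDef.mul_dotProduct_inv_mulVec_le_log_det_sub (hM : M.PosDef) {c : ℝ} (hc : 0 ≤ c)
    (x : n → ℝ) :
    c * (x ⬝ᵥ (M + c • vecMulVec x x)⁻¹ *ᵥ x)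
      ≤ Real.log (M + c • vecMulVec x x).det - Real.log M.det := by
  set N := M + c • vecMulVec x x
  have hN : N.PosDef := hM.of_le (le_add_smul_vecMulVec_self hc x)
  set q := x ⬝ᵥ N⁻¹ *ᵥ x
  have hdet : M.det = N.det * (1 - c * q) := by
    have hMN : M = N + vecMulVec (-c • x) x := by
      rw [smul_vecMulVec, neg_smul, add_neg_cancel_right]
    rw [hMN, det_add_vecMulVec ((isUnit_iff_isUnit_det N).1 hN.isUnit), mulVec_smul,
      dotProduct_smul, smul_eq_mul]
    ring
  have hpos : 0 < 1 - c * q := by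
    have := hM.det_pos
    rw [hdet] at this
    exact pos_of_mul_pos_right this hN.det_pos.le
  rw [hdet, Real.log_mul hN.det_pos.ne' hpos.ne']
  linarith [Real.log_le_sub_one_of_pos hpos]

/-- Termwise `log λ ≤ log B + λ / B - 1` over the eigenvalues `λ` of `M`. -/
theorem PosDef.log_det_le (hM : M.PosDef) {B : ℝ} (hB : 0 < B)
    (htr : M.trace ≤ Fintype.card n * B) : Real.log M.det ≤ Fintype.card n * Real.log B := by
  have heig := hM.eigenvalues_pos
  have hsum : ∑ i, hM.1.eigenvalues i ≤ Fintype.card n * B := by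
    simpa [hM.1.trace_eq_sum_eigenvalues] using htr
  rw [hM.1.det_eq_prod_eigenvalues]
  simp only [RCLike.ofReal_real_eq_id, id]
  rw [Real.log_prod fun i _ => (heig i).ne']
  calc ∑ i, Real.log (hM.1.eigenvalues i)
      ≤ ∑ i, (Real.log B + (hM.1.eigenvalues i / B - 1)) := sum_le_sum fun i _ => by
        have := Real.log_le_sub_one_of_pos (div_pos (heig i) hB)
        rw [Real.log_div (heig i).ne' hB.ne'] at this
        linarith
    _ = Fintype.card n * Real.log B + ((∑ i, hM.1.eigenvalues i) / B - Fintype.card n) := by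
        simp [sum_add_distrib, sum_div]
    _ ≤ Fintype.card n * Real.log B := by
        linarith [(div_le_iff₀ hB).2 hsum]

end Matrix

theorem dual_averaging_regret_le [DecidableEq n] {A : ℕ → Matrix n n ℝ} {θ g u : ℕ → n → ℝ}
    {T : ℕ} (hA : ∀ t, (A t).PosDef) (hmono : Monotone A) (hθ1 : θ 1 = 0)
    (hθ : ∀ t ∈ Icc 1 T, θ (t + 1) = θ t + g t) (hu : ∀ t ∈ Icc 1 T, u t = (A t)⁻¹ *ᵥ θ t)
    (w : n → ℝ) :
    ∑ t ∈ Icc 1 T, (g t ⬝ᵥ (w - u t) - g t ⬝ᵥ (A t)⁻¹ *ᵥ g t / 2) ≤ w ⬝ᵥ A T *ᵥ w / 2 := by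
  set Ψ : ℕ → ℝ := fun t => θ (t + 1) ⬝ᵥ w - θ (t + 1) ⬝ᵥ (A t)⁻¹ *ᵥ θ (t + 1) / 2
  have hstep : ∀ t < T, g (t + 1) ⬝ᵥ (w - u (t + 1))
      - g (t + 1) ⬝ᵥ (A (t + 1))⁻¹ *ᵥ g (t + 1) / 2 ≤ Ψ (t + 1) - Ψ t := by
    intro t ht
    have hmem : t + 1 ∈ Icc 1 T := mem_Icc.2 ⟨by omega, ht⟩
    have hpot := (hA t).add_dotProduct_inv_mulVec_add_le (hA (t + 1)) (hmono t.le_succ)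
      (θ (t + 1)) (g (t + 1))
    simp only [Ψ]
    rw [hθ _ hmem, hu _ hmem, dotProduct_sub, add_dotProduct (θ (t + 1)) (g (t + 1)) w]
    linarith
  have hΨT : Ψ T ≤ w ⬝ᵥ A T *ᵥ w / 2 := by
    simp only [Ψ]
    linarith [(hA T).two_mul_dotProduct_sub_le (θ (T + 1)) w]
  have hΨ0 : Ψ 0 = 0 := by simp [Ψ, hθ1]
  linarith [sum_Icc_le_sub_of_le (f := Ψ)
    (g := fun t => g t ⬝ᵥ (w - u t) - g t ⬝ᵥ (A t)⁻¹ *ᵥ g t / 2) hstep]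

section RankOneUpdates

variable {A : ℕ → Matrix n n ℝ} {x : ℕ → n → ℝ}

theorem trace_le_of_eq_add_smul_vecMulVec {c : ℝ}
    (hA : ∀ t, A (t + 1) = A t + c • vecMulVec (x (t + 1)) (x (t + 1))) (hc : 0 ≤ c) {T : ℕ}
    {B : ℝ} (hx : ∀ t ∈ Icc 1 T, x t ⬝ᵥ x t ≤ B) :
    (A T).trace ≤ (A 0).trace + T * (c * B) :=
  calc (A T).trace = (A 0).trace + ∑ t ∈ range T, ((A (t + 1)).trace - (A t).trace) := by
        rw [sum_range_sub (fun t => (A t).trace)]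
        ring
    _ ≤ (A 0).trace + ∑ _t ∈ range T, c * B := by
        gcongr with t ht
        rw [hA, trace_add, trace_smul, trace_vecMulVec, smul_eq_mul, add_sub_cancel_left]
        exact mul_le_mul_of_nonneg_left (hx _ (mem_Icc.2 ⟨by omega, by simpa using ht⟩)) hc
    _ = (A 0).trace + T * (c * B) := by simp

theorem monotone_of_eq_add_smul_vecMulVec {c : ℝ}
    (hA : ∀ t, A (t + 1) = A t + c • vecMulVec (x (t + 1)) (x (t + 1))) (hc : 0 ≤ c) :
    Monotone A :=
  monotone_nat_of_le_succ fun t => hA t ▸ le_add_smul_vecMulVec_self hc _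

variable [DecidableEq n]

theorem sum_mul_dotProduct_inv_mulVec_le_log_det_sub {c : ℝ}
    (hA : ∀ t, A (t + 1) = A t + c • vecMulVec (x (t + 1)) (x (t + 1))) (hc : 0 ≤ c)
    (hA0 : (A 0).PosDef) (T : ℕ) :
    ∑ t ∈ Icc 1 T, c * (x t ⬝ᵥ (A t)⁻¹ *ᵥ x t) ≤ Real.log (A T).det - Real.log (A 0).det :=
  sum_Icc_le_sub_of_le (f := fun t => Real.log (A t).det) fun t _ => hA t ▸
    PosDef.mul_dotProduct_inv_mulVec_le_log_det_sub
      (hA0.of_le (monotone_of_eq_add_smul_vecMulVec hA hc t.zero_le)) hc _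

/-- The elliptical potential lemma. -/
theorem sum_dotProduct_inv_mulVec_le {r X : ℝ} (hr : 0 < r)
    (hA : ∀ t, A (t + 1) = A t + r⁻¹ • vecMulVec (x (t + 1)) (x (t + 1))) (hA0 : A 0 = 1)
    {T : ℕ} (hx : ∀ t ∈ Icc 1 T, √(∑ i, x t i ^ 2) ≤ X) :
    ∑ t ∈ Icc 1 T, x t ⬝ᵥ (A t)⁻¹ *ᵥ x t
      ≤ r * (Fintype.card n * Real.log (1 + T * X ^ 2 / r)) := by
  have hr' : 0 ≤ r⁻¹ := inv_nonneg.2 hr.le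
  have hpos : (A T).PosDef :=
    (hA0 ▸ PosDef.one).of_le (monotone_of_eq_add_smul_vecMulVec hA hr' T.zero_le)
  have htr := trace_le_of_eq_add_smul_vecMulVec hA hr' fun t ht =>
    dotProduct_self_le_card_mul_sq (hx t ht)
  have hdet := hpos.log_det_le (B := 1 + T * X ^ 2 / r) (by positivity)
    (htr.trans_eq (by rw [hA0, trace_one]; field_simp))
  have hsum := sum_mul_dotProduct_inv_mulVec_le_log_det_sub hA hr' (hA0 ▸ PosDef.one) T
  rw [← mul_sum, hA0, det_one, Real.log_one, sub_zero] at hsum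
  exact (inv_mul_le_iff₀ hr).1 (hsum.trans hdet)

theorem ssol_linear_regret_le {r X η : ℝ} (hr : 0 < r) (hη : 0 < η)
    (hA : ∀ t, A (t + 1) = A t + r⁻¹ • vecMulVec (x (t + 1)) (x (t + 1))) (hA0 : A 0 = 1)
    {T : ℕ} (hx : ∀ t ∈ Icc 1 T, √(∑ i, x t i ^ 2) ≤ X) {θ u : ℕ → n → ℝ} {s : ℕ → ℝ}
    (hs : ∀ t ∈ Icc 1 T, |s t| ≤ 1) (hθ1 : θ 1 = 0)
    (hθ : ∀ t ∈ Icc 1 T, θ (t + 1) = θ t + (η * s t) • x t)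
    (hu : ∀ t ∈ Icc 1 T, u t = (A t)⁻¹ *ᵥ θ t) (w : n → ℝ) :
    ∑ t ∈ Icc 1 T, s t * (x t ⬝ᵥ w - x t ⬝ᵥ u t)
      ≤ w ⬝ᵥ A T *ᵥ w / (2 * η) + η / 2 * r * Fintype.card n * Real.log (1 + T * X ^ 2 / r) := by
  have hmono := monotone_of_eq_add_smul_vecMulVec hA (inv_nonneg.2 hr.le)
  have hpos : ∀ t, (A t).PosDef := fun t => (hA0 ▸ PosDef.one).of_le (hmono t.zero_le)
  have hquad : ∀ t ∈ Icc 1 T, (η * s t) • x t ⬝ᵥ (A t)⁻¹ *ᵥ ((η * s t) • x t)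
      ≤ η ^ 2 * (x t ⬝ᵥ (A t)⁻¹ *ᵥ x t) := by
    intro t ht
    have hq := (hpos t).inv.posSemidef.dotProduct_mulVec_nonneg (x t)
    rw [star_trivial] at hq
    have := mul_le_mul_of_nonneg_left ((sq_le_one_iff_abs_le_one _).2 (hs t ht))
      (mul_nonneg (sq_nonneg η) hq)
    rw [smul_dotProduct, mulVec_smul, dotProduct_smul, smul_eq_mul, smul_eq_mul]
    linear_combination this
  have hg : ∀ t, (η * s t) • x t ⬝ᵥ (w - u t) = η * (s t * (x t ⬝ᵥ w - x t ⬝ᵥ u t)) := by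
    intro t
    rw [smul_dotProduct, smul_eq_mul, dotProduct_sub, mul_assoc]
  have hlin := dual_averaging_regret_le hpos hmono hθ1 hθ hu w
  simp only [hg] at hlin
  rw [sum_sub_distrib, ← mul_sum, ← sum_div] at hlin
  have hell := (sum_le_sum hquad).trans_eq (mul_sum ..).symm |>.trans <|
    mul_le_mul_of_nonneg_left (sum_dotProduct_inv_mulVec_le hr hA hA0 hx) (sq_nonneg η)
  refine le_of_mul_le_mul_left ?_ hη
  calc η * ∑ t ∈ Icc 1 T, s t * (x t ⬝ᵥ w - x t ⬝ᵥ u t)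
      ≤ w ⬝ᵥ A T *ᵥ w / 2 + η ^ 2 / 2 * (r * (Fintype.card n * Real.log (1 + T * X ^ 2 / r))) := by
        linarith
    _ = _ := by field_simp

end RankOneUpdates

end

/-- SSOL regret bound:
regret ≤ `D²/(2η) + (η/2) r d log(1 + T X²/r) + λ X (log T + 1)`. -/
theorem ssol_regret {d : ℕ} (T : ℕ) (hT : 1 ≤ T) (X η lam r D : ℝ)
    (hη : 0 < η) (hlam : 0 ≤ lam) (hr : 0 < r)
    (x : ℕ → Fin d → ℝ) (y : ℕ → ℝ)
    (hy : ∀ t ∈ Finset.Icc 1 T, y t = 1 ∨ y t = -1)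
    (hX1 : ∀ t ∈ Finset.Icc 1 T, ∑ i, |x t i| ≤ X)
    (hX2 : ∀ t ∈ Finset.Icc 1 T, Real.sqrt (∑ i, (x t i) ^ 2) ≤ X)
    (A : ℕ → Matrix (Fin d) (Fin d) ℝ)
    (hA0 : A 0 = 1)
    (hA : ∀ t : ℕ, A (t + 1) = A t + r⁻¹ • Matrix.vecMulVec (x (t + 1)) (x (t + 1)))
    (θ u w : ℕ → Fin d → ℝ) (L : ℕ → ℝ)
    (loss : ℕ → (Fin d → ℝ) → ℝ)
    (hloss : ∀ t v, loss t v = max 0 (1 - y t * dot v (x t)))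
    (hθ1 : θ 1 = 0)
    (hu : ∀ t ∈ Finset.Icc 1 T, u t = (A t)⁻¹.mulVec (θ t))
    (hw : ∀ t ∈ Finset.Icc 1 T, ∀ i,
      w t i = Real.sign (u t i) * max (|u t i| - lam / t) 0)
    (hL : ∀ t, L t = if 0 < loss t (w t) then 1 else 0)
    (hθ : ∀ t ∈ Finset.Icc 1 T, θ (t + 1) = θ t + (η * L t * y t) • x t)
    (wv : Fin d → ℝ) (hwv : wv ⬝ᵥ (A T).mulVec wv ≤ D ^ 2) :
    ∑ t ∈ Finset.Icc 1 T, loss t (w t) - ∑ t ∈ Finset.Icc 1 T, loss t wv ≤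
      D ^ 2 / (2 * η) + η / 2 * r * d * Real.log (1 + T * X ^ 2 / r)
        + lam * X * (Real.log T + 1) := by
  have hX : 0 ≤ X := (Real.sqrt_le_iff.1 (hX2 1 (mem_Icc.2 ⟨le_rfl, hT⟩))).1
  have hLy : ∀ t ∈ Icc 1 T, |L t * y t| ≤ 1 := fun t ht => by
    rw [hL]
    rcases hy t ht with h | h <;> split_ifs <;> simp [h]
  have hround : ∀ t ∈ Icc 1 T, loss t (w t) - loss t wv
      ≤ L t * y t * (x t ⬝ᵥ wv - x t ⬝ᵥ u t) + lam * X * (t : ℝ)⁻¹ := fun t ht => by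
    have hloss' : ∀ v, loss t v = max 0 (1 - y t * (v ⬝ᵥ x t)) := hloss t
    rw [hloss', hloss']
    linear_combination hinge_sub_le_of_softThreshold (u := u t) (w := w t) (v := wv)
      (by rw [hL, hloss']) (hLy t ht) (by positivity) (hX1 t ht) (hw t ht)
  have hlin := ssol_linear_regret_le hr hη hA hA0 hX2 hLy hθ1
    (fun t ht => by rw [hθ t ht, mul_assoc]) hu wv
  rw [Fintype.card_fin] at hlin
  calc ∑ t ∈ Icc 1 T, loss t (w t) - ∑ t ∈ Icc 1 T, loss t wv
      = ∑ t ∈ Icc 1 T, (loss t (w t) - loss t wv) := (sum_sub_distrib ..).symm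
    _ ≤ ∑ t ∈ Icc 1 T, L t * y t * (x t ⬝ᵥ wv - x t ⬝ᵥ u t)
        + lam * X * ∑ t ∈ Icc 1 T, (t : ℝ)⁻¹ := by
        rw [mul_sum, ← sum_add_distrib]
        exact sum_le_sum hround
    _ ≤ (wv ⬝ᵥ A T *ᵥ wv / (2 * η) + η / 2 * r * d * Real.log (1 + T * X ^ 2 / r))
        + lam * X * (Real.log T + 1) := by
        gcongr
        exact sum_Icc_inv_le_log_add_one T
    _ ≤ _ := by gcongr
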